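/- The B-sequent calculus for E^B is sound and complete: a B-sequent (Γ | Ψ ⇒ Φ | Δ) with finite sets of formulas is derivable in the calculus if and only if the corresponding B-entailment is valid, i.e., for every valuation v into FOUR, either some formula of Γ is not-accepted, or some formula of Δ is accepted, or some formula of Φ is not-rejected, or some formula of Ψ is rejected. Moreover, every valid finite B-sequent has a cut-free derivation. -/

import Mathlib

/-- The four truth-values of Dunn-Belnap logic. -/
inductive Four where
  | f | bot | top | t
deriving DecidableEq, Repr

namespace Four

/-- Whether the value contains the classical value T. -/
def hasT : Four → Bool
  | t => true | top => true | _ => false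

/-- Whether the value contains the classical value F. -/
def hasF : Four → Bool
  | f => true | top => true | _ => false

/-- Build a value from its T-part and F-part. -/
def mk : Bool → Bool → Four
  | true, true => top
  | true, false => t
  | false, true => f
  | false, false => bot

/-- Logical order: x ≤_t y iff x∩{T} ⊆ y∩{T} and y∩{F} ⊆ x∩{F}. -/
def leT (x y : Four) : Prop :=
  (x.hasT = true → y.hasT = true) ∧ (y.hasF = true → x.hasF = true)

/-- Information order: x ≤_i y iff x ⊆ y. -/
def leI (x y : Four) : Prop :=
  (x.hasT = true → y.hasT = true) ∧ (x.hasF = true → y.hasF = true)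

/-- Negation: swaps T and F membership. -/
def negT (x : Four) : Four := mk x.hasF x.hasT

/-- Infimum w.r.t. the logical order. -/
def meetT (x y : Four) : Four := mk (x.hasT && y.hasT) (x.hasF || y.hasF)

/-- Supremum w.r.t. the logical order. -/
def joinT (x y : Four) : Four := mk (x.hasT || y.hasT) (x.hasF && y.hasF)

/-- Infimum w.r.t. the information order. -/
def meetI (x y : Four) : Four := mk (x.hasT && y.hasT) (x.hasF && y.hasF)

/-- Supremum w.r.t. the information order. -/
def joinI (x y : Four) : Four := mk (x.hasT || y.hasT) (x.hasF || y.hasF)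

/-- Acceptance: designated set Y = {⊤, t}. -/
def acc (x : Four) : Prop := x = top ∨ x = t

/-- Rejection: set N = {f, ⊤}. -/
def rej (x : Four) : Prop := x = f ∨ x = top

end Four

/-- Formulas of the language S: propositional variables, ¬, ∧, ∨. -/
inductive Form where
  | var : ℕ → Form
  | neg : Form → Form
  | conj : Form → Form → Form
  | disj : Form → Form → Form
deriving DecidableEq

/-- A valuation (agent) is determined by its values on variables; it is
extended homomorphically to all formulas. -/
def Form.eval (v : ℕ → Four) : Form → Four
  | var n => v n
  | neg φ => (φ.eval v).negT
  | conj φ ψ => (φ.eval v).meetT (ψ.eval v)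
  | disj φ ψ => (φ.eval v).joinT (ψ.eval v)

open Four Form

/-- Truth-preserving (Tarskian) entailment ⊨ᵗ = ⊨⁴. -/
def entT (Γ : Set Form) (α : Form) : Prop :=
  ¬ ∃ v : ℕ → Four, (∀ γ ∈ Γ, acc (γ.eval v)) ∧ ¬ acc (α.eval v)

/-- Falsity entailment ⊨ᶠ: no valuation not-rejects all premises while rejecting the conclusion. -/
def entF (Γ : Set Form) (α : Form) : Prop :=
  ¬ ∃ v : ℕ → Four, (∀ γ ∈ Γ, ¬ rej (γ.eval v)) ∧ rej (α.eval v)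

/-- q-entailment: no valuation not-rejects all premises while not-accepting the conclusion. -/
def entQ (Γ : Set Form) (α : Form) : Prop :=
  ¬ ∃ v : ℕ → Four, (∀ γ ∈ Γ, ¬ rej (γ.eval v)) ∧ ¬ acc (α.eval v)

/-- p-entailment: no valuation accepts all premises while rejecting the conclusion. -/
def entP (Γ : Set Form) (α : Form) : Prop :=
  ¬ ∃ v : ℕ → Four, (∀ γ ∈ Γ, acc (γ.eval v)) ∧ rej (α.eval v)

/-- B-entailment (Γ | Ψ ⊨ Φ | Δ): no valuation accepts all of Γ,
not-accepts all of Δ, rejects all of Φ and not-rejects all of Ψ. -/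
def Bent (Γ Ψ Φ Δ : Set Form) : Prop :=
  ¬ ∃ v : ℕ → Four,
    (∀ γ ∈ Γ, acc (γ.eval v)) ∧ (∀ δ ∈ Δ, ¬ acc (δ.eval v)) ∧
    (∀ φ ∈ Φ, rej (φ.eval v)) ∧ (∀ ψ ∈ Ψ, ¬ rej (ψ.eval v))

/-- Derivability in the B-sequent calculus; the Boolean flag records whether
the cut rules are allowed (`true`) — a derivation with flag `false` is cut-free. -/
inductive Deriv : Bool → Finset Form → Finset Form → Finset Form → Finset Form → Prop
  | inT (c : Bool) (α : Form) : Deriv c {α} ∅ ∅ {α}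
  | inF (c : Bool) (α : Form) : Deriv c ∅ {α} {α} ∅
  | weak {c Γ Ψ Φ Δ} (Γ' Ψ' Φ' Δ' : Finset Form) :
      Deriv c Γ Ψ Φ Δ → Deriv c (Γ ∪ Γ') (Ψ ∪ Ψ') (Φ ∪ Φ') (Δ ∪ Δ')
  | cutT {Γ Ψ Φ Δ : Finset Form} {α : Form} :
      Deriv true (insert α Γ) Ψ Φ Δ → Deriv true Γ Ψ Φ (insert α Δ) →
      Deriv true Γ Ψ Φ Δ
  | cutF {Γ Ψ Φ Δ : Finset Form} {α : Form} :
      Deriv true Γ (insert α Ψ) Φ Δ → Deriv true Γ Ψ (insert α Φ) Δ →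
      Deriv true Γ Ψ Φ Δ
  | andR4 {c Γ Ψ Φ Δ} {α β : Form} :
      Deriv c Γ Ψ Φ (insert α Δ) → Deriv c Γ Ψ Φ (insert β Δ) →
      Deriv c Γ Ψ Φ (insert (Form.conj α β) Δ)
  | andR3 {c Γ Ψ Φ Δ} {α β : Form} :
      Deriv c Γ Ψ (insert α Φ) Δ → Deriv c Γ Ψ (insert β Φ) Δ →
      Deriv c Γ Ψ (insert (Form.conj α β) Φ) Δ
  | andL1 {c Γ Ψ Φ Δ} {α β : Form} :
      Deriv c (insert α (insert β Γ)) Ψ Φ Δ →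
      Deriv c (insert (Form.conj α β) Γ) Ψ Φ Δ
  | andL2 {c Γ Ψ Φ Δ} {α β : Form} :
      Deriv c Γ (insert α (insert β Ψ)) Φ Δ →
      Deriv c Γ (insert (Form.conj α β) Ψ) Φ Δ
  | orL1 {c Γ Ψ Φ Δ} {α β : Form} :
      Deriv c (insert α Γ) Ψ Φ Δ → Deriv c (insert β Γ) Ψ Φ Δ →
      Deriv c (insert (Form.disj α β) Γ) Ψ Φ Δ
  | orL2 {c Γ Ψ Φ Δ} {α β : Form} :
      Deriv c Γ (insert α Ψ) Φ Δ → Deriv c Γ (insert β Ψ) Φ Δ →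
      Deriv c Γ (insert (Form.disj α β) Ψ) Φ Δ
  | orR3 {c Γ Ψ Φ Δ} {α β : Form} :
      Deriv c Γ Ψ (insert α (insert β Φ)) Δ →
      Deriv c Γ Ψ (insert (Form.disj α β) Φ) Δ
  | orR4 {c Γ Ψ Φ Δ} {α β : Form} :
      Deriv c Γ Ψ Φ (insert α (insert β Δ)) →
      Deriv c Γ Ψ Φ (insert (Form.disj α β) Δ)
  | negL1 {c Γ Ψ Φ Δ} {α : Form} :
      Deriv c Γ Ψ (insert α Φ) Δ → Deriv c (insert (Form.neg α) Γ) Ψ Φ Δ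
  | negL2 {c Γ Ψ Φ Δ} {α : Form} :
      Deriv c Γ Ψ Φ (insert α Δ) → Deriv c Γ (insert (Form.neg α) Ψ) Φ Δ
  | negR3 {c Γ Ψ Φ Δ} {α : Form} :
      Deriv c (insert α Γ) Ψ Φ Δ → Deriv c Γ Ψ (insert (Form.neg α) Φ) Δ
  | negR4 {c Γ Ψ Φ Δ} {α : Form} :
      Deriv c Γ (insert α Ψ) Φ Δ → Deriv c Γ Ψ Φ (insert (Form.neg α) Δ)

/-- Semantic validity of a finite B-sequent. -/
def BvalidFin (Γ Ψ Φ Δ : Finset Form) : Prop :=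
  ∀ v : ℕ → Four,
    (∃ γ ∈ Γ, ¬ acc (γ.eval v)) ∨ (∃ δ ∈ Δ, acc (δ.eval v)) ∨
    (∃ φ ∈ Φ, ¬ rej (φ.eval v)) ∨ (∃ ψ ∈ Ψ, rej (ψ.eval v))

/-!
Soundness is checked rule by rule. For completeness, every logical rule is invertible: the
conclusion is valid iff all its premises are. A valid sequent can therefore be decomposed, the
total size of its formulas decreasing, until only variables remain, and a valid sequent of
variables is an initial sequent up to weakening: otherwise the valuation reading a variable's
T-part off `Γ` and its F-part off `Φ` refutes it. Cut is never used, so the derivation is cut-free.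

Conflation exchanges acceptance with non-rejection, so the semantics and the calculus are both
symmetric under `Γ ↔ Ψ`, `Φ ↔ Δ`; this halves every case analysis.
-/

namespace Four

/-- Fitting's conflation: exchanges `⊤` and `⊥`, fixes `t` and `f`. -/
def conflate (x : Four) : Four := mk (!x.hasF) (!x.hasT)

@[simp] lemma acc_negT (x : Four) : acc x.negT ↔ rej x := by
  cases x <;> simp [acc, rej, negT, mk, hasT, hasF]
@[simp] lemma acc_meetT (x y : Four) : acc (x.meetT y) ↔ acc x ∧ acc y := by
  cases x <;> cases y <;> simp [acc, meetT, mk, hasT, hasF]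
@[simp] lemma acc_joinT (x y : Four) : acc (x.joinT y) ↔ acc x ∨ acc y := by
  cases x <;> cases y <;> simp [acc, joinT, mk, hasT, hasF]
@[simp] lemma acc_mk (a b : Bool) : acc (mk a b) ↔ a = true := by
  cases a <;> cases b <;> simp [acc, mk]
@[simp] lemma rej_mk (a b : Bool) : rej (mk a b) ↔ b = true := by
  cases a <;> cases b <;> simp [rej, mk]
@[simp] lemma acc_conflate (x : Four) : acc x.conflate ↔ ¬ rej x := by
  cases x <;> simp [acc, rej, conflate, mk, hasT, hasF]
@[simp] lemma rej_conflate (x : Four) : rej x.conflate ↔ ¬ acc x := by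
  cases x <;> simp [acc, rej, conflate, mk, hasT, hasF]

lemma negT_conflate (x : Four) : x.conflate.negT = x.negT.conflate := by cases x <;> rfl
lemma meetT_conflate (x y : Four) : x.conflate.meetT y.conflate = (x.meetT y).conflate := by
  cases x <;> cases y <;> rfl
lemma joinT_conflate (x y : Four) : x.conflate.joinT y.conflate = (x.joinT y).conflate := by
  cases x <;> cases y <;> rfl

end Four

lemma Form.eval_conflate (v : ℕ → Four) (φ : Form) :
    φ.eval (conflate ∘ v) = (φ.eval v).conflate := by
  induction φ with
  | var n => rfl
  | neg φ ih => simp only [eval, ih, negT_conflate]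
  | conj φ ψ ihφ ihψ => simp only [eval, ihφ, ihψ, meetT_conflate]
  | disj φ ψ ihφ ihψ => simp only [eval, ihφ, ihψ, joinT_conflate]

namespace BvalidFin

variable {Γ Ψ Φ Δ : Finset Form} {α β : Form}

lemma swap (h : BvalidFin Γ Ψ Φ Δ) : BvalidFin Ψ Γ Δ Φ := by
  intro v
  have := h (conflate ∘ v)
  simp only [eval_conflate, acc_conflate, rej_conflate, not_not] at this
  grind

lemma mono {Γ' Ψ' Φ' Δ' : Finset Form} (h : BvalidFin Γ Ψ Φ Δ)
    (hΓ : Γ ⊆ Γ') (hΨ : Ψ ⊆ Ψ') (hΦ : Φ ⊆ Φ') (hΔ : Δ ⊆ Δ') : BvalidFin Γ' Ψ' Φ' Δ' := by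
  intro v
  rcases h v with ⟨x, hx, h⟩ | ⟨x, hx, h⟩ | ⟨x, hx, h⟩ | ⟨x, hx, h⟩
  · exact .inl ⟨x, hΓ hx, h⟩
  · exact .inr <| .inl ⟨x, hΔ hx, h⟩
  · exact .inr <| .inr <| .inl ⟨x, hΦ hx, h⟩
  · exact .inr <| .inr <| .inr ⟨x, hΨ hx, h⟩

lemma singleton_left_right (α : Form) : BvalidFin {α} ∅ ∅ {α} := fun v => by
  simp only [Finset.mem_singleton, exists_eq_left]
  grind

lemma cut (h₁ : BvalidFin (insert α Γ) Ψ Φ Δ) (h₂ : BvalidFin Γ Ψ Φ (insert α Δ)) :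
    BvalidFin Γ Ψ Φ Δ := fun v => by
  have h₁ := h₁ v
  have h₂ := h₂ v
  simp only [Finset.exists_mem_insert] at h₁ h₂
  grind

lemma insert_neg_left_iff :
    BvalidFin (insert (neg α) Γ) Ψ Φ Δ ↔ BvalidFin Γ Ψ (insert α Φ) Δ := by
  simp only [BvalidFin, Finset.exists_mem_insert, eval, acc_negT]
  exact forall_congr' fun _ => by grind

lemma insert_conj_left_iff :
    BvalidFin (insert (conj α β) Γ) Ψ Φ Δ ↔ BvalidFin (insert α (insert β Γ)) Ψ Φ Δ := by
  simp only [BvalidFin, Finset.exists_mem_insert, eval, acc_meetT]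
  exact forall_congr' fun _ => by grind

lemma insert_disj_left_iff :
    BvalidFin (insert (disj α β) Γ) Ψ Φ Δ ↔
      BvalidFin (insert α Γ) Ψ Φ Δ ∧ BvalidFin (insert β Γ) Ψ Φ Δ := by
  simp only [BvalidFin, Finset.exists_mem_insert, eval, acc_joinT, ← forall_and]
  exact forall_congr' fun _ => by grind

lemma insert_neg_right_iff :
    BvalidFin Γ Ψ Φ (insert (neg α) Δ) ↔ BvalidFin Γ (insert α Ψ) Φ Δ := by
  simp only [BvalidFin, Finset.exists_mem_insert, eval, acc_negT]
  exact forall_congr' fun _ => by grind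

lemma insert_conj_right_iff :
    BvalidFin Γ Ψ Φ (insert (conj α β) Δ) ↔
      BvalidFin Γ Ψ Φ (insert α Δ) ∧ BvalidFin Γ Ψ Φ (insert β Δ) := by
  simp only [BvalidFin, Finset.exists_mem_insert, eval, acc_meetT, ← forall_and]
  exact forall_congr' fun _ => by grind

lemma insert_disj_right_iff :
    BvalidFin Γ Ψ Φ (insert (disj α β) Δ) ↔ BvalidFin Γ Ψ Φ (insert α (insert β Δ)) := by
  simp only [BvalidFin, Finset.exists_mem_insert, eval, acc_joinT]
  exact forall_congr' fun _ => by grind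

end BvalidFin

namespace Deriv

variable {c : Bool} {Γ Ψ Φ Δ : Finset Form}

lemma swap (h : Deriv c Γ Ψ Φ Δ) : Deriv c Ψ Γ Δ Φ := by
  induction h with
  | inT c α => exact inF c α
  | inF c α => exact inT c α
  | weak Γ' Ψ' Φ' Δ' _ ih => exact weak Ψ' Γ' Δ' Φ' ih
  | cutT _ _ ih₁ ih₂ => exact cutF ih₁ ih₂
  | cutF _ _ ih₁ ih₂ => exact cutT ih₁ ih₂
  | andR4 _ _ ih₁ ih₂ => exact andR3 ih₁ ih₂
  | andR3 _ _ ih₁ ih₂ => exact andR4 ih₁ ih₂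
  | andL1 _ ih => exact andL2 ih
  | andL2 _ ih => exact andL1 ih
  | orL1 _ _ ih₁ ih₂ => exact orL2 ih₁ ih₂
  | orL2 _ _ ih₁ ih₂ => exact orL1 ih₁ ih₂
  | orR3 _ ih => exact orR4 ih
  | orR4 _ ih => exact orR3 ih
  | negL1 _ ih => exact negL2 ih
  | negL2 _ ih => exact negL1 ih
  | negR3 _ ih => exact negR4 ih
  | negR4 _ ih => exact negR3 ih

lemma mono {Γ' Ψ' Φ' Δ' : Finset Form} (h : Deriv c Γ Ψ Φ Δ)
    (hΓ : Γ ⊆ Γ') (hΨ : Ψ ⊆ Ψ') (hΦ : Φ ⊆ Φ') (hΔ : Δ ⊆ Δ') : Deriv c Γ' Ψ' Φ' Δ' := by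
  simpa only [Finset.union_eq_right.2 hΓ, Finset.union_eq_right.2 hΨ, Finset.union_eq_right.2 hΦ,
    Finset.union_eq_right.2 hΔ] using h.weak Γ' Ψ' Φ' Δ'

lemma of_mem_left_right {α : Form} (hΓ : α ∈ Γ) (hΔ : α ∈ Δ) : Deriv c Γ Ψ Φ Δ :=
  (inT c α).mono (Finset.singleton_subset_iff.2 hΓ) (Finset.empty_subset Ψ)
    (Finset.empty_subset Φ) (Finset.singleton_subset_iff.2 hΔ)

theorem bvalidFin (h : Deriv c Γ Ψ Φ Δ) : BvalidFin Γ Ψ Φ Δ := by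
  induction h with
  | inT _ α => exact .singleton_left_right α
  | inF _ α => exact (BvalidFin.singleton_left_right α).swap
  | weak _ _ _ _ _ ih =>
    exact ih.mono Finset.subset_union_left Finset.subset_union_left Finset.subset_union_left
      Finset.subset_union_left
  | cutT _ _ ih₁ ih₂ => exact ih₁.cut ih₂
  | cutF _ _ ih₁ ih₂ => exact (ih₁.swap.cut ih₂.swap).swap
  | andR4 _ _ ih₁ ih₂ => exact BvalidFin.insert_conj_right_iff.2 ⟨ih₁, ih₂⟩
  | andR3 _ _ ih₁ ih₂ => exact (BvalidFin.insert_conj_right_iff.2 ⟨ih₁.swap, ih₂.swap⟩).swap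
  | andL1 _ ih => exact BvalidFin.insert_conj_left_iff.2 ih
  | andL2 _ ih => exact (BvalidFin.insert_conj_left_iff.2 ih.swap).swap
  | orL1 _ _ ih₁ ih₂ => exact BvalidFin.insert_disj_left_iff.2 ⟨ih₁, ih₂⟩
  | orL2 _ _ ih₁ ih₂ => exact (BvalidFin.insert_disj_left_iff.2 ⟨ih₁.swap, ih₂.swap⟩).swap
  | orR3 _ ih => exact (BvalidFin.insert_disj_right_iff.2 ih.swap).swap
  | orR4 _ ih => exact BvalidFin.insert_disj_right_iff.2 ih
  | negL1 _ ih => exact BvalidFin.insert_neg_left_iff.2 ih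
  | negL2 _ ih => exact (BvalidFin.insert_neg_left_iff.2 ih.swap).swap
  | negR3 _ ih => exact (BvalidFin.insert_neg_right_iff.2 ih.swap).swap
  | negR4 _ ih => exact BvalidFin.insert_neg_right_iff.2 ih

end Deriv

lemma Finset.sum_insert_le_add {ι M : Type*} [DecidableEq ι] [AddCommMonoid M] [PartialOrder M]
    [CanonicallyOrderedAdd M] (f : ι → M) (a : ι) (s : Finset ι) :
    ∑ x ∈ insert a s, f x ≤ f a + ∑ x ∈ s, f x := by
  by_cases h : a ∈ s
  · rw [Finset.insert_eq_of_mem h]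
    exact le_add_self
  · rw [Finset.sum_insert h]

def Form.size : Form → ℕ
  | var _ => 1
  | neg φ => φ.size + 1
  | conj φ ψ => φ.size + ψ.size + 1
  | disj φ ψ => φ.size + ψ.size + 1

def sequentSize (Γ Ψ Φ Δ : Finset Form) : ℕ :=
  ∑ x ∈ Γ, x.size + ∑ x ∈ Ψ, x.size + ∑ x ∈ Φ, x.size + ∑ x ∈ Δ, x.size

lemma sequentSize_swap (Γ Ψ Φ Δ : Finset Form) : sequentSize Ψ Γ Δ Φ = sequentSize Γ Ψ Φ Δ := by
  unfold sequentSize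
  omega

namespace Deriv

variable {c : Bool} {Γ Ψ Φ Δ : Finset Form}

lemma of_compound_left {x : Form} (hx : x ∈ Γ) (hxv : ∀ n, x ≠ var n) (h : BvalidFin Γ Ψ Φ Δ)
    (ih : ∀ Γ' Ψ' Φ' Δ', sequentSize Γ' Ψ' Φ' Δ' < sequentSize Γ Ψ Φ Δ →
      BvalidFin Γ' Ψ' Φ' Δ' → Deriv c Γ' Ψ' Φ' Δ') :
    Deriv c Γ Ψ Φ Δ := by
  have hsize := Finset.sum_insert (Finset.notMem_erase x Γ) (f := Form.size)
  rw [Finset.insert_erase hx] at hsize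
  rw [← Finset.insert_erase hx] at h ⊢
  cases x with
  | var n => exact absurd rfl (hxv n)
  | neg α =>
    exact negL1 <| ih _ _ _ _
      (by grind [sequentSize, Finset.sum_insert_le_add, size]) (BvalidFin.insert_neg_left_iff.1 h)
  | conj α β =>
    exact andL1 <| ih _ _ _ _
      (by grind [sequentSize, Finset.sum_insert_le_add, size]) (BvalidFin.insert_conj_left_iff.1 h)
  | disj α β =>
    obtain ⟨hα, hβ⟩ := BvalidFin.insert_disj_left_iff.1 h
    exact orL1 (ih _ _ _ _ (by grind [sequentSize, Finset.sum_insert_le_add, size]) hα)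
      (ih _ _ _ _ (by grind [sequentSize, Finset.sum_insert_le_add, size]) hβ)

lemma of_compound_right {x : Form} (hx : x ∈ Δ) (hxv : ∀ n, x ≠ var n) (h : BvalidFin Γ Ψ Φ Δ)
    (ih : ∀ Γ' Ψ' Φ' Δ', sequentSize Γ' Ψ' Φ' Δ' < sequentSize Γ Ψ Φ Δ →
      BvalidFin Γ' Ψ' Φ' Δ' → Deriv c Γ' Ψ' Φ' Δ') :
    Deriv c Γ Ψ Φ Δ := by
  have hsize := Finset.sum_insert (Finset.notMem_erase x Δ) (f := Form.size)
  rw [Finset.insert_erase hx] at hsize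
  rw [← Finset.insert_erase hx] at h ⊢
  cases x with
  | var n => exact absurd rfl (hxv n)
  | neg α =>
    exact negR4 <| ih _ _ _ _
      (by grind [sequentSize, Finset.sum_insert_le_add, size]) (BvalidFin.insert_neg_right_iff.1 h)
  | conj α β =>
    obtain ⟨hα, hβ⟩ := BvalidFin.insert_conj_right_iff.1 h
    exact andR4 (ih _ _ _ _ (by grind [sequentSize, Finset.sum_insert_le_add, size]) hα)
      (ih _ _ _ _ (by grind [sequentSize, Finset.sum_insert_le_add, size]) hβ)
  | disj α β =>
    exact orR4 <| ih _ _ _ _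
      (by grind [sequentSize, Finset.sum_insert_le_add, size]) (BvalidFin.insert_disj_right_iff.1 h)

end Deriv

lemma BvalidFin.exists_mem_inter_of_forall_var {Γ Ψ Φ Δ : Finset Form}
    (hΓ : ∀ x ∈ Γ, ∃ n, x = var n) (hΨ : ∀ x ∈ Ψ, ∃ n, x = var n)
    (hΦ : ∀ x ∈ Φ, ∃ n, x = var n) (hΔ : ∀ x ∈ Δ, ∃ n, x = var n) (h : BvalidFin Γ Ψ Φ Δ) :
    (∃ x ∈ Γ, x ∈ Δ) ∨ (∃ x ∈ Ψ, x ∈ Φ) := by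
  rcases h fun n => mk (decide (var n ∈ Γ)) (decide (var n ∈ Φ)) with
    ⟨x, hx, hacc⟩ | ⟨x, hx, hacc⟩ | ⟨x, hx, hrej⟩ | ⟨x, hx, hrej⟩
  · obtain ⟨n, rfl⟩ := hΓ x hx
    simp [eval, hx] at hacc
  · obtain ⟨n, rfl⟩ := hΔ x hx
    simp only [eval, acc_mk, decide_eq_true_eq] at hacc
    exact .inl ⟨_, hacc, hx⟩
  · obtain ⟨n, rfl⟩ := hΦ x hx
    simp [eval, hx] at hrej
  · obtain ⟨n, rfl⟩ := hΨ x hx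
    simp only [eval, rej_mk, decide_eq_true_eq] at hrej
    exact .inr ⟨_, hx, hrej⟩

theorem Deriv.of_bvalidFin {c : Bool} {Γ Ψ Φ Δ : Finset Form} (h : BvalidFin Γ Ψ Φ Δ) :
    Deriv c Γ Ψ Φ Δ := by
  have ih : ∀ Γ' Ψ' Φ' Δ', sequentSize Γ' Ψ' Φ' Δ' < sequentSize Γ Ψ Φ Δ →
      BvalidFin Γ' Ψ' Φ' Δ' → Deriv c Γ' Ψ' Φ' Δ' := fun _ _ _ _ _ h' => of_bvalidFin h'
  have ih_swap : ∀ Γ' Ψ' Φ' Δ', sequentSize Γ' Ψ' Φ' Δ' < sequentSize Ψ Γ Δ Φ →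
      BvalidFin Γ' Ψ' Φ' Δ' → Deriv c Γ' Ψ' Φ' Δ' := by
    rw [sequentSize_swap]
    exact ih
  by_cases hΓ : ∃ x ∈ Γ, ∀ n, x ≠ var n
  · obtain ⟨x, hx, hxv⟩ := hΓ
    exact of_compound_left hx hxv h ih
  by_cases hΔ : ∃ x ∈ Δ, ∀ n, x ≠ var n
  · obtain ⟨x, hx, hxv⟩ := hΔ
    exact of_compound_right hx hxv h ih
  by_cases hΨ : ∃ x ∈ Ψ, ∀ n, x ≠ var n
  · obtain ⟨x, hx, hxv⟩ := hΨ
    exact (of_compound_left hx hxv h.swap ih_swap).swap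
  by_cases hΦ : ∃ x ∈ Φ, ∀ n, x ≠ var n
  · obtain ⟨x, hx, hxv⟩ := hΦ
    exact (of_compound_right hx hxv h.swap ih_swap).swap
  push Not at hΓ hΔ hΨ hΦ
  rcases h.exists_mem_inter_of_forall_var hΓ hΨ hΦ hΔ with ⟨x, hxΓ, hxΔ⟩ | ⟨x, hxΨ, hxΦ⟩
  · exact of_mem_left_right hxΓ hxΔ
  · exact (of_mem_left_right hxΨ hxΦ).swap
termination_by sequentSize Γ Ψ Φ Δ

/-- the B-sequent calculus is sound and complete, and every
valid finite B-sequent has a cut-free derivation. -/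
theorem Bcalculus_sound_complete (Γ Ψ Φ Δ : Finset Form) :
    (Deriv true Γ Ψ Φ Δ ↔ BvalidFin Γ Ψ Φ Δ) ∧
    (BvalidFin Γ Ψ Φ Δ → Deriv false Γ Ψ Φ Δ) :=
  ⟨⟨Deriv.bvalidFin, Deriv.of_bvalidFin⟩, Deriv.of_bvalidFin⟩
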